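/- arXiv:1212.5401 — 6 statements merged into one kernel-verified Lean document; each statement's English description precedes it below -/
import Mathlib

section
/- For a geometric random variable N_p on {1,2,...} with parameter p ∈ (0,1) (i.e. P(N_p = k) = p(1-p)^{k-1}), the expectation E[1/√N_p] satisfies √p ≤ E[1/√N_p] ≤ 2√p/(1+√p). -/
/-!
The coefficients `c n = multichoose (1/2) n = (2n choose n) / 4ⁿ` of `(1 - x)^(-1/2)` satisfy
`(n + 1) c (n + 1) = (n + 1/2) c n`, whence `c n ≤ 1 / √(n + 1) ≤ 2 c (n + 1)`. Weighting these
bounds by `p (1 - p)^k` and summing with `∑ c k (1 - p)^k = 1 / √p` gives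
`√p ≤ E[1/√N_p] ≤ 2p (1/√p - 1) / (1 - p) = 2√p / (1 + √p)`.
-/

open Ring

theorem succ_nsmul_multichoose_succ {R : Type*} [CommRing R] [BinomialRing R] (r : R) (n : ℕ) :
    (n + 1) • multichoose r (n + 1) = (r + n) * multichoose r n := by
  have h := choose_add_smul_choose (r + n - 1) n 1
  rw [multichoose_eq, multichoose_eq]
  simp only [Nat.choose_one_right, choose_one_right] at h
  convert h using 2 <;> push_cast <;> ring_nf

theorem hasSum_multichoose_mul_pow (a : ℝ) {x : ℝ} (hx : |x| < 1) :
    HasSum (fun n ↦ multichoose a n * x ^ n) (1 / (1 - x) ^ a) := by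
  have hmem : x ∈ Metric.eball (0 : ℝ) 1 := by
    rw [mem_eball_zero_iff, ← ofReal_norm, Real.norm_eq_abs]
    exact ENNReal.ofReal_lt_one.mpr hx
  simpa [FormalMultilinearSeries.ofScalars_apply_eq, multichoose_eq, mul_comm] using
    (Real.one_div_one_sub_rpow_hasFPowerSeriesOnBall_zero a).hasSum hmem

theorem hasSum_multichoose_succ_mul_pow (a : ℝ) {x : ℝ} (hx : |x| < 1) (hx0 : x ≠ 0) :
    HasSum (fun n ↦ multichoose a (n + 1) * x ^ n) ((1 / (1 - x) ^ a - 1) / x) := by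
  have h := (hasSum_nat_add_iff' 1).mpr (hasSum_multichoose_mul_pow a hx)
  simp only [Finset.range_one, Finset.sum_singleton, multichoose_zero_right, pow_zero,
    mul_one] at h
  have hterm : (fun n ↦ multichoose a (n + 1) * x ^ n) =
      fun n ↦ multichoose a (n + 1) * x ^ (n + 1) / x := by
    ext n
    rw [pow_succ]
    field_simp
  rw [hterm]
  exact h.div_const x

lemma multichoose_half_succ (n : ℕ) :
    multichoose (1 / 2 : ℝ) (n + 1) = (n + 1 / 2) / (n + 1) * multichoose (1 / 2 : ℝ) n := by
  have h := succ_nsmul_multichoose_succ (1 / 2 : ℝ) n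
  rw [nsmul_eq_mul] at h
  field_simp
  push_cast at h
  linarith

lemma multichoose_half_pos (n : ℕ) : 0 < multichoose (1 / 2 : ℝ) n := by
  induction n with
  | zero => simp
  | succ n ih => rw [multichoose_half_succ]; positivity

lemma multichoose_half_sq_mul_succ_le_one (n : ℕ) :
    multichoose (1 / 2 : ℝ) n ^ 2 * (n + 1) ≤ 1 := by
  induction n with
  | zero => simp
  | succ n ih =>
    have key : ((n + 1 / 2) / (n + 1)) ^ 2 * (n + 1 + 1) ≤ (n + 1 : ℝ) := by
      rw [div_pow, div_mul_eq_mul_div, div_le_iff₀ (by positivity)]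
      nlinarith
    rw [multichoose_half_succ]
    push_cast
    calc ((n + 1 / 2) / (n + 1) * multichoose (1 / 2 : ℝ) n) ^ 2 * (n + 1 + 1)
        = multichoose (1 / 2 : ℝ) n ^ 2 * (((n + 1 / 2) / (n + 1)) ^ 2 * (n + 1 + 1)) := by ring
      _ ≤ multichoose (1 / 2 : ℝ) n ^ 2 * (n + 1) := by gcongr
      _ ≤ 1 := ih

lemma one_le_four_mul_succ_mul_multichoose_half_succ_sq (n : ℕ) :
    1 ≤ 4 * (n + 1) * multichoose (1 / 2 : ℝ) (n + 1) ^ 2 := by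
  induction n with
  | zero => norm_num [multichoose_one_right]
  | succ n ih =>
    have key : (n + 1 : ℝ) ≤ ((n + 1 + 1 / 2) / (n + 1 + 1)) ^ 2 * (n + 1 + 1) := by
      rw [div_pow, div_mul_eq_mul_div, le_div_iff₀ (by positivity)]
      nlinarith
    rw [multichoose_half_succ (n + 1)]
    push_cast
    calc (1 : ℝ) ≤ 4 * (n + 1) * multichoose (1 / 2 : ℝ) (n + 1) ^ 2 := ih
      _ ≤ 4 * (((n + 1 + 1 / 2) / (n + 1 + 1)) ^ 2 * (n + 1 + 1)) *
          multichoose (1 / 2 : ℝ) (n + 1) ^ 2 := by gcongr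
      _ = _ := by ring

lemma multichoose_half_le_inv_sqrt (n : ℕ) :
    multichoose (1 / 2 : ℝ) n ≤ 1 / √(n + 1) := by
  rw [one_div √(n + 1 : ℝ), ← Real.sqrt_inv, Real.le_sqrt' (multichoose_half_pos n), ← one_div,
    le_div_iff₀ (by positivity)]
  exact multichoose_half_sq_mul_succ_le_one n

lemma inv_sqrt_le_two_mul_multichoose_half_succ (n : ℕ) :
    1 / √(n + 1) ≤ 2 * multichoose (1 / 2 : ℝ) (n + 1) := by
  have hc := multichoose_half_pos (n + 1)
  rw [one_div √(n + 1 : ℝ), ← Real.sqrt_inv, Real.sqrt_le_left (by positivity), ← one_div,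
    div_le_iff₀ (by positivity)]
  linarith [one_le_four_mul_succ_mul_multichoose_half_succ_sq n]

/-- For a geometric random variable `N_p` on `{1,2,...}` with parameter `p ∈ (0,1)`,
`√p ≤ E[1/√N_p] ≤ 2√p/(1+√p)`. -/
theorem stmt_0 (p : ℝ) (hp : 0 < p) (hp1 : p < 1) :
    Real.sqrt p ≤ ∑' k : ℕ, (1 / Real.sqrt (k + 1)) * (p * (1 - p) ^ k) ∧
    ∑' k : ℕ, (1 / Real.sqrt (k + 1)) * (p * (1 - p) ^ k) ≤
      2 * Real.sqrt p / (1 + Real.sqrt p) := by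
  set c : ℕ → ℝ := multichoose (1 / 2 : ℝ)
  have hq0 : 0 < 1 - p := by linarith
  have hq : |1 - p| < 1 := by rw [abs_lt]; constructor <;> linarith
  have hsqrt : (1 - (1 - p)) ^ (1 / 2 : ℝ) = √p := by rw [sub_sub_cancel, Real.sqrt_eq_rpow]
  have hsum := hasSum_multichoose_mul_pow (1 / 2) hq
  have hsum_succ := hasSum_multichoose_succ_mul_pow (1 / 2) hq hq0.ne'
  rw [hsqrt] at hsum hsum_succ
  have hlower (k : ℕ) : p * (c k * (1 - p) ^ k) ≤ 1 / √(k + 1) * (p * (1 - p) ^ k) := by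
    rw [mul_left_comm]
    gcongr
    exact multichoose_half_le_inv_sqrt k
  have hupper (k : ℕ) : 1 / √(k + 1) * (p * (1 - p) ^ k) ≤ 2 * p * (c (k + 1) * (1 - p) ^ k) := by
    calc 1 / √(k + 1) * (p * (1 - p) ^ k) ≤ 2 * c (k + 1) * (p * (1 - p) ^ k) := by
          gcongr
          exact inv_sqrt_le_two_mul_multichoose_half_succ k
      _ = _ := by ring
  have hsummable : Summable fun k : ℕ ↦ 1 / √(k + 1) * (p * (1 - p) ^ k) :=
    (hsum_succ.mul_left (2 * p)).summable.of_nonneg_of_le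
      (fun k ↦ mul_nonneg (by positivity) (mul_nonneg hp.le (pow_nonneg hq0.le k))) hupper
  set s := √p
  have hs : 0 < s := Real.sqrt_pos.mpr hp
  have hp_sq : p = s ^ 2 := (Real.sq_sqrt hp.le).symm
  constructor
  · calc s = p * (1 / s) := by field_simp; exact hp_sq.symm
      _ ≤ _ := hasSum_le hlower (hsum.mul_left p) hsummable.hasSum
  · calc _ ≤ 2 * p * ((1 / s - 1) / (1 - p)) :=
          hasSum_le hupper hsummable.hasSum (hsum_succ.mul_left (2 * p))
      _ = 2 * s / (1 + s) := by
          rw [hp_sq] at hq0 ⊢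
          field_simp
          ring
end

section
/- For positive reals σ and τ, the Kolmogorov distance between the centered normal distributions N(0,σ²) and N(0,τ²) is at most min(|1 - τ²/σ²|, |1 - σ²/τ²|). -/
/-!
With `Φ` the standard normal CDF, `N(0,σ²)` has CDF `z ↦ Φ (z / σ)`. For `σ ≤ τ` and `a = τ / σ ≥ 1`
the two CDFs at `z` are `Φ (a * u)` and `Φ u` with `u = z / τ`. Their difference is at most `1/2`,
because `a * u` and `u` lie on the same side of the median `0`, and at most
`(a - 1) |u| φ(u) ≤ a - 1`, because the density between `u` and `a * u` is largest at `u`.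
Finally `min (1/2) (a - 1)` is below both `|1 - a²|` and `|1 - a⁻²|`.
-/

open MeasureTheory ProbabilityTheory Set Real
open scoped Interval

lemma cdf_sub_cdf_eq_measureReal_Ioc {μ : Measure ℝ} [IsProbabilityMeasure μ] {a b : ℝ}
    (hab : a ≤ b) : cdf μ b - cdf μ a = μ.real (Ioc a b) := by
  rw [measureReal_def, ← measure_cdf μ, (cdf μ).measure_Ioc, measure_cdf,
    ENNReal.toReal_ofReal (sub_nonneg.2 (monotone_cdf μ hab))]

lemma cdf_gaussianReal_sub_cdf_eq_intervalIntegral (m : ℝ) {v : NNReal} (hv : v ≠ 0) (a b : ℝ) :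
    cdf (gaussianReal m v) b - cdf (gaussianReal m v) a =
      ∫ x in a..b, gaussianPDFReal m v x := by
  wlog hab : a ≤ b generalizing a b
  · rw [intervalIntegral.integral_symm, ← this b a (le_of_not_ge hab), neg_sub]
  rw [cdf_sub_cdf_eq_measureReal_Ioc hab, measureReal_def, gaussianReal_apply_eq_integral m hv,
    ENNReal.toReal_ofReal
      (setIntegral_nonneg measurableSet_Ioc fun x _ ↦ gaussianPDFReal_nonneg m v x),
    intervalIntegral.integral_of_le hab]

lemma cdf_gaussianReal_zero {v : NNReal} (hv : v ≠ 0) : cdf (gaussianReal 0 v) 0 = 1 / 2 := by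
  set μ := gaussianReal 0 v
  have : NullSingletonClass μ := nullSingletonClass_gaussianReal hv
  have hneg : μ.map (fun x ↦ -x) = μ := by simp [μ, gaussianReal_map_neg]
  have hsymm : μ (Iic 0) = μ (Ioi 0) := by
    rw [← hneg, Measure.map_apply measurable_neg measurableSet_Iic, hneg,
      measure_congr Ioi_ae_eq_Ici]
    congr 1
    ext x
    simp
  have hsum := measureReal_add_measureReal_compl (μ := μ) (measurableSet_Iic (a := (0 : ℝ)))
  rw [compl_Iic, measureReal_def, measureReal_def (s := Ioi 0), ← hsymm, probReal_univ] at hsum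
  rw [cdf_eq_real, measureReal_def]
  linarith

lemma gaussianPDFReal_zero_le_of_abs_le {v : NNReal} {x y : ℝ} (h : |x| ≤ |y|) :
    gaussianPDFReal 0 v y ≤ gaussianPDFReal 0 v x := by
  simp only [gaussianPDFReal, sub_zero]
  gcongr _ * rexp ?_
  exact div_le_div_of_nonneg_right (neg_le_neg (sq_le_sq.2 h)) (by positivity)

lemma abs_mul_gaussianPDFReal_zero_one_le_one (x : ℝ) : |x| * gaussianPDFReal 0 1 x ≤ 1 := by
  simp only [gaussianPDFReal, NNReal.coe_one, mul_one, sub_zero]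
  have hexp : |x| * rexp (-x ^ 2 / 2) ≤ 1 := by
    rw [neg_div, exp_neg, ← div_eq_mul_inv, div_le_one (exp_pos _)]
    nlinarith [add_one_le_exp (x ^ 2 / 2), sq_abs x, sq_nonneg (|x| - 1)]
  have hsqrt : (√(2 * π))⁻¹ ≤ 1 :=
    inv_le_one_of_one_le₀ (one_le_sqrt.2 (by nlinarith [pi_gt_three]))
  calc |x| * ((√(2 * π))⁻¹ * rexp (-x ^ 2 / 2))
      = (√(2 * π))⁻¹ * (|x| * rexp (-x ^ 2 / 2)) := by ring
    _ ≤ 1 * 1 := mul_le_mul hsqrt hexp (by positivity) zero_le_one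
    _ = 1 := one_mul 1

lemma abs_cdf_gaussianReal_mul_sub_cdf_le_half {v : NNReal} (hv : v ≠ 0) {a : ℝ} (ha : 0 ≤ a)
    (u : ℝ) : |cdf (gaussianReal 0 v) (a * u) - cdf (gaussianReal 0 v) u| ≤ 1 / 2 := by
  have hzero := cdf_gaussianReal_zero hv
  rw [abs_sub_le_iff]
  rcases le_total 0 u with hu | hu
  · have h₁ := monotone_cdf (gaussianReal 0 v) hu
    have h₂ := monotone_cdf (gaussianReal 0 v) (mul_nonneg ha hu)
    constructor <;>
      linarith [cdf_le_one (gaussianReal 0 v) u, cdf_le_one (gaussianReal 0 v) (a * u)]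
  · have h₁ := monotone_cdf (gaussianReal 0 v) hu
    have h₂ := monotone_cdf (gaussianReal 0 v) (mul_nonpos_of_nonneg_of_nonpos ha hu)
    constructor <;>
      linarith [cdf_nonneg (gaussianReal 0 v) u, cdf_nonneg (gaussianReal 0 v) (a * u)]

local notation "Φ" => cdf (gaussianReal 0 1)

lemma abs_cdf_mul_sub_cdf_le_sub_one {a : ℝ} (ha : 1 ≤ a) (u : ℝ) :
    |Φ (a * u) - Φ u| ≤ a - 1 := by
  have hdecay : ∀ x ∈ Ι u (a * u), ‖gaussianPDFReal 0 1 x‖ ≤ gaussianPDFReal 0 1 u := by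
    intro x hx
    rw [norm_of_nonneg (gaussianPDFReal_nonneg 0 1 x)]
    refine gaussianPDFReal_zero_le_of_abs_le ?_
    rcases le_total 0 u with hu | hu
    · rw [uIoc_of_le (le_mul_of_one_le_left hu ha)] at hx
      rw [abs_of_nonneg hu, abs_of_nonneg (hu.trans hx.1.le)]
      exact hx.1.le
    · rw [uIoc_of_ge (mul_le_of_one_le_left hu ha)] at hx
      rw [abs_of_nonpos hu, abs_of_nonpos (hx.2.trans hu)]
      linarith [hx.2]
  rw [cdf_gaussianReal_sub_cdf_eq_intervalIntegral 0 one_ne_zero, ← norm_eq_abs]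
  calc _ ≤ gaussianPDFReal 0 1 u * |a * u - u| :=
        intervalIntegral.norm_integral_le_of_norm_le_const hdecay
    _ = (a - 1) * (|u| * gaussianPDFReal 0 1 u) := by
      rw [← sub_one_mul, abs_mul, abs_of_nonneg (sub_nonneg.2 ha)]
      ring
    _ ≤ (a - 1) * 1 :=
      mul_le_mul_of_nonneg_left (abs_mul_gaussianPDFReal_zero_one_le_one u) (sub_nonneg.2 ha)
    _ = a - 1 := mul_one _

lemma gaussianReal_Iic_toReal_eq_cdf_div {σ : ℝ} (hσ : 0 < σ) (z : ℝ) :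
    (gaussianReal 0 ⟨σ ^ 2, sq_nonneg σ⟩ (Iic z)).toReal = Φ (z / σ) := by
  have hmap := gaussianReal_map_const_mul (μ := 0) (v := 1) σ
  rw [mul_zero, show NNReal.mk (σ ^ 2) (sq_nonneg σ) * 1 = ⟨σ ^ 2, sq_nonneg σ⟩ from mul_one _]
    at hmap
  rw [← hmap, Measure.map_apply (measurable_const_mul σ) measurableSet_Iic, cdf_eq_real,
    measureReal_def]
  congr 2
  ext x
  simp [le_div_iff₀ hσ, mul_comm]

lemma min_half_sub_one_le {a : ℝ} (ha : 1 ≤ a) :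
    min (1 / 2) (a - 1) ≤ min |1 - a ^ 2| |1 - (a ^ 2)⁻¹| := by
  have ha2 : 1 ≤ a ^ 2 := one_le_pow₀ ha
  rw [abs_of_nonpos (by linarith), abs_of_nonneg (sub_nonneg.2 (inv_le_one_of_one_le₀ ha2))]
  refine le_min ((min_le_right _ _).trans (by nlinarith)) ?_
  rcases le_total 2 (a ^ 2) with h | h
  · refine (min_le_left _ _).trans ?_
    have : (a ^ 2)⁻¹ ≤ 1 / 2 := by
      rw [inv_le_comm₀ (by positivity) (by norm_num)]
      linarith
    linarith
  · refine (min_le_right _ _).trans ?_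
    -- `1 ≤ a² (2 - a)` is `(a - 1) (a² - a - 1) ≤ 0`, and `a² - a - 1 ≤ 0` once `a² ≤ 2`
    have : (a ^ 2)⁻¹ ≤ 2 - a := by
      rw [inv_le_iff_one_le_mul₀ (by positivity)]
      nlinarith
    linarith

/-- Kolmogorov distance between `N(0,σ²)` and `N(0,τ²)` is at most
`min(|1 - τ²/σ²|, |1 - σ²/τ²|)`. -/
theorem stmt_5 (σ τ : ℝ) (hσ : 0 < σ) (hτ : 0 < τ) :
    ⨆ z : ℝ, |((gaussianReal 0 ⟨σ ^ 2, sq_nonneg σ⟩) (Set.Iic z)).toReal -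
        ((gaussianReal 0 ⟨τ ^ 2, sq_nonneg τ⟩) (Set.Iic z)).toReal| ≤
      min |1 - τ ^ 2 / σ ^ 2| |1 - σ ^ 2 / τ ^ 2| := by
  wlog hστ : σ ≤ τ generalizing σ τ
  · simpa only [abs_sub_comm, min_comm] using this τ σ hτ hσ (le_of_not_ge hστ)
  refine ciSup_le fun z ↦ ?_
  have ha : 1 ≤ τ / σ := (one_le_div hσ).2 hστ
  have hz : z / σ = τ / σ * (z / τ) := by field_simp
  have hτσ_sq : τ ^ 2 / σ ^ 2 = (τ / σ) ^ 2 := (div_pow τ σ 2).symm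
  have hστ_sq : σ ^ 2 / τ ^ 2 = ((τ / σ) ^ 2)⁻¹ := by rw [← hτσ_sq, inv_div]
  rw [gaussianReal_Iic_toReal_eq_cdf_div hσ, gaussianReal_Iic_toReal_eq_cdf_div hτ, hz, hτσ_sq,
    hστ_sq]
  exact (le_min (abs_cdf_gaussianReal_mul_sub_cdf_le_half one_ne_zero (by positivity) _)
    (abs_cdf_mul_sub_cdf_le_sub_one ha _)).trans (min_half_sub_one_le ha)
end

section
/- For positive reals σ and τ, the Wasserstein distance between the centered normal distributions N(0,σ²) and N(0,τ²) is at most 2·min(σ|1 - τ²/σ²|, τ|1 - σ²/τ²|). -/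
/-!
Couple the two Gaussians as `σ Z` and `τ Z` with `Z ~ N(0,1)`. For a 1-Lipschitz `h` this gives
`|𝔼 h(σZ) - 𝔼 h(τZ)| ≤ |σ - τ| 𝔼|Z| ≤ |σ - τ|`, and `σ |1 - τ²/σ²| = |σ - τ| (σ + τ) / σ`
dominates `|σ - τ|` (symmetrically for `τ`).
-/

open MeasureTheory ProbabilityTheory
open scoped NNReal

section LipschitzCoupling

variable {α E F : Type*} [MeasurableSpace α] {μ : Measure α} [NormedAddCommGroup E]
  [NormedAddCommGroup F] {g : E → F} {K : ℝ≥0}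

theorem LipschitzWith.integrable_comp [IsFiniteMeasure μ] (hg : LipschitzWith K g) {f : α → E}
    (hf : Integrable f μ) : Integrable (fun x ↦ g (f x)) μ := by
  refine ((hf.norm.const_mul K).add (integrable_const ‖g 0‖)).mono'
    (hg.continuous.comp_aestronglyMeasurable hf.1) (ae_of_all _ fun x ↦ ?_)
  have := hg.norm_sub_le (f x) 0
  rw [sub_zero] at this
  simp only [Pi.add_apply]
  linarith [norm_le_norm_sub_add (g (f x)) (g 0)]

theorem LipschitzWith.norm_integral_comp_sub_integral_comp_le [IsFiniteMeasure μ]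
    [NormedSpace ℝ F] (hg : LipschitzWith K g) {f₁ f₂ : α → E} (hf₁ : Integrable f₁ μ) (hf₂ : Integrable f₂ μ) :
    ‖∫ x, g (f₁ x) ∂μ - ∫ x, g (f₂ x) ∂μ‖ ≤ K * ∫ x, ‖f₁ x - f₂ x‖ ∂μ := by
  rw [← integral_sub (hg.integrable_comp hf₁) (hg.integrable_comp hf₂), ← integral_const_mul]
  exact norm_integral_le_of_norm_le ((hf₁.sub hf₂).norm.const_mul _)
    (ae_of_all _ fun x ↦ hg.norm_sub_le _ _)

end LipschitzCoupling

theorem gaussianReal_zero_sq_eq_map_const_mul (c : ℝ) :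
    gaussianReal 0 ⟨c ^ 2, sq_nonneg c⟩ = (gaussianReal 0 1).map (c * ·) := by
  rw [gaussianReal_map_const_mul, mul_zero, mul_one]
  rfl

theorem integral_abs_gaussianReal_le_one : ∫ x, |x| ∂gaussianReal 0 1 ≤ 1 := by
  have hsq : ∫ x, x ^ 2 ∂gaussianReal 0 1 = 1 := by
    have := variance_of_integral_eq_zero (μ := gaussianReal 0 1) aemeasurable_id
      integral_id_gaussianReal
    simpa [variance_id_gaussianReal] using this.symm
  have hsq_int : Integrable (fun x : ℝ ↦ x ^ 2) (gaussianReal 0 1) :=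
    (memLp_id_gaussianReal 2).integrable_sq
  calc ∫ x, |x| ∂gaussianReal 0 1 ≤ ∫ x, (1 + x ^ 2) / 2 ∂gaussianReal 0 1 := by
        refine integral_mono ((memLp_id_gaussianReal 1).integrable le_rfl).abs ?_ fun x ↦ ?_
        · exact ((integrable_const 1).add hsq_int).div_const 2
        · nlinarith [sq_abs x, sq_nonneg (|x| - 1)]
    _ = 1 := by
        rw [integral_div, integral_add (integrable_const 1) hsq_int]
        simp [hsq]

theorem abs_sub_le_mul_abs_one_sub_sq_div {a b : ℝ} (ha : 0 < a) (hb : 0 ≤ b) :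
    |a - b| ≤ a * |1 - b ^ 2 / a ^ 2| := by
  have : a * |1 - b ^ 2 / a ^ 2| = |a - b| * ((a + b) / a) := by
    rw [show 1 - b ^ 2 / a ^ 2 = (a - b) * (a + b) / a ^ 2 by field_simp; ring, abs_div, abs_mul,
      abs_of_nonneg (by positivity : 0 ≤ a + b), abs_of_pos (by positivity : 0 < a ^ 2)]
    field_simp
  rw [this]
  exact le_mul_of_one_le_right (abs_nonneg _) ((one_le_div ha).mpr (by linarith))

/-- Wasserstein distance between `N(0,σ²)` and `N(0,τ²)` is at most
`2 min(σ|1 - τ²/σ²|, τ|1 - σ²/τ²|)`: every 1-Lipschitz test function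
distinguishes them by at most this amount. -/
theorem stmt_6 (σ τ : ℝ) (hσ : 0 < σ) (hτ : 0 < τ) (h : ℝ → ℝ)
    (hh : LipschitzWith 1 h) :
    |(∫ x, h x ∂(gaussianReal 0 ⟨σ ^ 2, sq_nonneg σ⟩)) -
        ∫ x, h x ∂(gaussianReal 0 ⟨τ ^ 2, sq_nonneg τ⟩)| ≤
      2 * min (σ * |1 - τ ^ 2 / σ ^ 2|) (τ * |1 - σ ^ 2 / τ ^ 2|) := by
  have hZ : Integrable id (gaussianReal 0 1) := (memLp_id_gaussianReal 1).integrable le_rfl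
  have hcoupling := hh.norm_integral_comp_sub_integral_comp_le (hZ.const_mul σ) (hZ.const_mul τ)
  simp only [id, Real.norm_eq_abs, ← sub_mul, abs_mul, NNReal.coe_one, one_mul,
    integral_const_mul] at hcoupling
  rw [gaussianReal_zero_sq_eq_map_const_mul, gaussianReal_zero_sq_eq_map_const_mul,
    integral_map (by fun_prop) hh.continuous.aestronglyMeasurable,
    integral_map (by fun_prop) hh.continuous.aestronglyMeasurable]
  calc _ ≤ |σ - τ| * ∫ x, |x| ∂gaussianReal 0 1 := hcoupling
    _ ≤ |σ - τ| := mul_le_of_le_one_right (abs_nonneg _) integral_abs_gaussianReal_le_one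
    _ ≤ min (σ * |1 - τ ^ 2 / σ ^ 2|) (τ * |1 - σ ^ 2 / τ ^ 2|) :=
        le_min (abs_sub_le_mul_abs_one_sub_sq_div hσ hτ.le)
          (abs_sub_comm σ τ ▸ abs_sub_le_mul_abs_one_sub_sq_div hτ hσ.le)
    _ ≤ _ := le_mul_of_one_le_left (le_min (by positivity) (by positivity)) one_le_two
end

section
/- Let U and V be nonnegative random variables, σ > 0, and ζ a standard normal random variable independent of both U and V. Then the Kolmogorov distance between the laws of σ√U·ζ and σ√V·ζ is at most the Kolmogorov distance between the laws of U and V. -/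
/-!
Conditionally on `ζ = s`, the event `σ √U s ≤ z` says that `U` lies in the preimage of a half-line
under the monotone or antitone map `u ↦ σ s √u`: a lower or an upper set of `ℝ`, hence a closed or
open half-line (or `∅`, `ℝ`). On such sets the laws of `U` and `V` differ by at most their
Kolmogorov distance, open half-lines being increasing limits of closed ones. By independence the law
of `(ζ, U)` is the product of the laws, so the distribution function of `σ √U ζ` at `z` is the
Gaussian average of these conditional probabilities, and the bound survives the averaging.
-/

open MeasureTheory ProbabilityTheory Filter Set Topology

theorem IsLowerSet.eq_empty_or_univ_or_Iic_or_Iio {α : Type*} [ConditionallyCompleteLinearOrder α]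
    {S : Set α} (hS : IsLowerSet S) : S = ∅ ∨ S = univ ∨ ∃ c, S = Iic c ∨ S = Iio c := by
  rcases S.eq_empty_or_nonempty with hempty | hne
  · exact Or.inl hempty
  have below_of_lt_sSup : ∀ x, x < sSup S → x ∈ S := fun x hx ↦
    let ⟨y, hyS, hxy⟩ := exists_lt_of_lt_csSup hne hx
    hS hxy.le hyS
  by_cases hbdd : BddAbove S
  · refine Or.inr (Or.inr ⟨sSup S, ?_⟩)
    by_cases hmem : sSup S ∈ S
    · exact Or.inl (subset_antisymm (fun x hx ↦ le_csSup hbdd hx) (hS.Iic_subset hmem))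
    · refine Or.inr (subset_antisymm (fun x hx ↦ ?_) below_of_lt_sSup)
      exact (le_csSup hbdd hx).lt_of_ne fun h ↦ hmem (h ▸ hx)
  · refine Or.inr (Or.inl (eq_univ_of_forall fun x ↦ ?_))
    obtain ⟨y, hyS, hxy⟩ := not_bddAbove_iff.1 hbdd x
    exact hS hxy.le hyS

theorem IsLowerSet.preimage_antitone_isUpperSet {α β : Type*} [Preorder α] [Preorder β]
    {s : Set α} (hs : IsLowerSet s) {f : β → α} (hf : Antitone f) : IsUpperSet (f ⁻¹' s) :=
  fun _ _ hab ha ↦ hs (hf hab) ha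

noncomputable def kolmogorovDist (μ ν : Measure ℝ) : ℝ :=
  ⨆ t, |μ.real (Iic t) - ν.real (Iic t)|

section KolmogorovDist

variable {μ ν : Measure ℝ} [IsProbabilityMeasure μ] [IsProbabilityMeasure ν]

theorem abs_measureReal_Iic_sub_le_kolmogorovDist (t : ℝ) :
    |μ.real (Iic t) - ν.real (Iic t)| ≤ kolmogorovDist μ ν :=
  le_ciSup (f := fun t ↦ |μ.real (Iic t) - ν.real (Iic t)|)
    ⟨1, by
      rintro _ ⟨t, rfl⟩
      exact abs_sub_le_of_nonneg_of_le measureReal_nonneg measureReal_le_one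
        measureReal_nonneg measureReal_le_one⟩ t

theorem kolmogorovDist_nonneg : 0 ≤ kolmogorovDist μ ν :=
  (abs_nonneg _).trans (abs_measureReal_Iic_sub_le_kolmogorovDist (μ := μ) (ν := ν) 0)

theorem abs_measureReal_Iio_sub_le_kolmogorovDist (c : ℝ) :
    |μ.real (Iio c) - ν.real (Iio c)| ≤ kolmogorovDist μ ν := by
  obtain ⟨u, hu_mono, hu_lt, hu_lim⟩ := exists_seq_strictMono_tendsto c
  have hunion : ⋃ n, Iic (u n) = Iio c := iUnion_Iic_eq_Iio_of_lt_of_tendsto hu_lt hu_lim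
  have hlim : ∀ m : Measure ℝ, [IsProbabilityMeasure m] →
      Tendsto (fun n ↦ m.real (Iic (u n))) atTop (𝓝 (m.real (Iio c))) := fun m _ ↦ by
    have h : Tendsto (fun n ↦ m (Iic (u n))) atTop (𝓝 (m (⋃ n, Iic (u n)))) :=
      tendsto_measure_iUnion_atTop (monotone_Iic.comp hu_mono.monotone)
    rw [hunion] at h
    exact (ENNReal.tendsto_toReal (measure_ne_top m _)).comp h
  exact le_of_tendsto ((hlim μ).sub (hlim ν)).abs
    (Eventually.of_forall fun n ↦ abs_measureReal_Iic_sub_le_kolmogorovDist (u n))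

theorem IsLowerSet.abs_measureReal_sub_le_kolmogorovDist {S : Set ℝ} (hS : IsLowerSet S) :
    |μ.real S - ν.real S| ≤ kolmogorovDist μ ν := by
  rcases hS.eq_empty_or_univ_or_Iic_or_Iio with rfl | rfl | ⟨c, rfl | rfl⟩
  · simpa using kolmogorovDist_nonneg
  · simpa using kolmogorovDist_nonneg
  · exact abs_measureReal_Iic_sub_le_kolmogorovDist c
  · exact abs_measureReal_Iio_sub_le_kolmogorovDist c

theorem IsUpperSet.abs_measureReal_sub_le_kolmogorovDist {S : Set ℝ} (hS : IsUpperSet S) :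
    |μ.real S - ν.real S| ≤ kolmogorovDist μ ν := by
  have hmeas : MeasurableSet S := hS.ordConnected.measurableSet
  have h := hS.compl.abs_measureReal_sub_le_kolmogorovDist (μ := μ) (ν := ν)
  rwa [measureReal_compl hmeas, measureReal_compl hmeas, probReal_univ,
    probReal_univ, sub_sub_sub_cancel_left, abs_sub_comm] at h

end KolmogorovDist

theorem MeasureTheory.Measure.measureReal_prod_eq_integral {α β : Type*} [MeasurableSpace α]
    [MeasurableSpace β] (γ : Measure α) (μ : Measure β) [IsFiniteMeasure μ]
    {A : Set (α × β)} (hA : MeasurableSet A) :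
    (γ.prod μ).real A = ∫ s, μ.real (Prod.mk s ⁻¹' A) ∂γ := by
  rw [measureReal_def, Measure.prod_apply hA, ← integral_toReal
    (measurable_measure_prodMk_left hA).aemeasurable (ae_of_all _ fun _ ↦ measure_lt_top _ _)]
  rfl

theorem abs_measureReal_prod_sub_le {α β : Type*} [MeasurableSpace α] [MeasurableSpace β]
    (γ : Measure α) [IsProbabilityMeasure γ] (μ ν : Measure β) [IsFiniteMeasure μ]
    [IsFiniteMeasure ν] {A : Set (α × β)} (hA : MeasurableSet A) {C : ℝ}
    (hC : ∀ s, |μ.real (Prod.mk s ⁻¹' A) - ν.real (Prod.mk s ⁻¹' A)| ≤ C) :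
    |(γ.prod μ).real A - (γ.prod ν).real A| ≤ C := by
  have hint : ∀ m : Measure β, [IsFiniteMeasure m] →
      Integrable (fun s ↦ m.real (Prod.mk s ⁻¹' A)) γ := fun m _ ↦
    .of_bound (measurable_measure_prodMk_left hA).ennreal_toReal.aestronglyMeasurable
      (m.real univ) (ae_of_all _ fun s ↦ by
        rw [Real.norm_of_nonneg measureReal_nonneg]; exact measureReal_mono (subset_univ _))
  rw [Measure.measureReal_prod_eq_integral γ μ hA, Measure.measureReal_prod_eq_integral γ ν hA,
    ← integral_sub (hint μ) (hint ν)]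
  simpa using norm_integral_le_of_norm_le_const (μ := γ)
    (ae_of_all _ fun s ↦ (Real.norm_eq_abs _).trans_le (hC s))

theorem kolmogorovDist_map_prod_le (γ μ ν : Measure ℝ) [IsProbabilityMeasure γ]
    [IsProbabilityMeasure μ] [IsProbabilityMeasure ν] {g : ℝ → ℝ → ℝ}
    (hg : Measurable (Function.uncurry g)) (hmono : ∀ s, Monotone (g s) ∨ Antitone (g s)) :
    kolmogorovDist ((γ.prod μ).map (Function.uncurry g)) ((γ.prod ν).map (Function.uncurry g)) ≤
      kolmogorovDist μ ν := by
  refine ciSup_le fun z ↦ ?_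
  rw [map_measureReal_apply hg measurableSet_Iic, map_measureReal_apply hg measurableSet_Iic]
  refine abs_measureReal_prod_sub_le γ μ ν (hg measurableSet_Iic) fun s ↦ ?_
  rcases hmono s with h | h
  · exact ((isLowerSet_Iic z).preimage h).abs_measureReal_sub_le_kolmogorovDist
  · exact ((isLowerSet_Iic z).preimage_antitone_isUpperSet h).abs_measureReal_sub_le_kolmogorovDist

section Law

variable {Ω : Type*} [MeasurableSpace Ω] {P : Measure Ω}

theorem kolmogorovDist_map {X Y : Ω → ℝ} (hX : Measurable X) (hY : Measurable Y) :
    kolmogorovDist (P.map X) (P.map Y) =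
      ⨆ t, |(P {ω | X ω ≤ t}).toReal - (P {ω | Y ω ≤ t}).toReal| := by
  simp only [kolmogorovDist, map_measureReal_apply hX measurableSet_Iic,
    map_measureReal_apply hY measurableSet_Iic, measureReal_def]
  rfl

theorem ProbabilityTheory.IndepFun.map_uncurry_eq {α β γ : Type*} [MeasurableSpace α]
    [MeasurableSpace β] [MeasurableSpace γ] [IsFiniteMeasure P] {X : Ω → α} {Y : Ω → β}
    (hX : Measurable X) (hY : Measurable Y) (hXY : IndepFun X Y P) {g : α → β → γ}
    (hg : Measurable (Function.uncurry g)) :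
    P.map (fun ω ↦ g (X ω) (Y ω)) = ((P.map X).prod (P.map Y)).map (Function.uncurry g) := by
  rw [← hXY.map_prod_eq_prod_map_map hX.aemeasurable hY.aemeasurable,
    Measure.map_map hg (hX.prodMk hY)]
  rfl

end Law

theorem Real.monotone_or_antitone_mul_sqrt_mul (a b : ℝ) :
    Monotone (fun u ↦ a * √u * b) ∨ Antitone (fun u ↦ a * √u * b) := by
  rcases le_total 0 (a * b) with hab | hab
  · exact Or.inl fun u v huv ↦ by nlinarith [Real.sqrt_le_sqrt huv]
  · exact Or.inr fun u v huv ↦ by nlinarith [Real.sqrt_le_sqrt huv]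

theorem stmt_9_general {Ω : Type*} [MeasureSpace Ω] [IsProbabilityMeasure (ℙ : Measure Ω)]
    (U V ζ : Ω → ℝ) (hUmeas : Measurable U) (hVmeas : Measurable V)
    (hζmeas : Measurable ζ)
    (hζ : Measure.map ζ ℙ = gaussianReal 0 1)
    (hζU : IndepFun ζ U ℙ) (hζV : IndepFun ζ V ℙ)
    (σ : ℝ) :
    ⨆ z : ℝ, |(ℙ {ω | σ * Real.sqrt (U ω) * ζ ω ≤ z}).toReal -
        (ℙ {ω | σ * Real.sqrt (V ω) * ζ ω ≤ z}).toReal| ≤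
      ⨆ t : ℝ, |(ℙ {ω | U ω ≤ t}).toReal - (ℙ {ω | V ω ≤ t}).toReal| := by
  have : IsProbabilityMeasure (Measure.map U ℙ) :=
    Measure.isProbabilityMeasure_map hUmeas.aemeasurable
  have : IsProbabilityMeasure (Measure.map V ℙ) :=
    Measure.isProbabilityMeasure_map hVmeas.aemeasurable
  let g : ℝ → ℝ → ℝ := fun s u ↦ σ * √u * s
  have hg : Measurable (Function.uncurry g) := by fun_prop
  rw [← kolmogorovDist_map (by fun_prop) (by fun_prop), ← kolmogorovDist_map hUmeas hVmeas,
    hζU.map_uncurry_eq (g := g) hζmeas hUmeas hg, hζV.map_uncurry_eq (g := g) hζmeas hVmeas hg, hζ]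
  exact kolmogorovDist_map_prod_le _ _ _ hg fun s ↦ Real.monotone_or_antitone_mul_sqrt_mul σ s

/-- For nonnegative random variables `U`, `V`, `σ > 0` and a standard normal `ζ`
independent of each of them, the Kolmogorov distance between the laws of `σ√U ζ`
and `σ√V ζ` is at most the Kolmogorov distance between the laws of `U` and `V`. -/
theorem stmt_9 {Ω : Type*} [MeasureSpace Ω] [IsProbabilityMeasure (ℙ : Measure Ω)]
    (U V ζ : Ω → ℝ) (hUmeas : Measurable U) (hVmeas : Measurable V)
    (hζmeas : Measurable ζ)
    (hU : ∀ ω, 0 ≤ U ω) (hV : ∀ ω, 0 ≤ V ω)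
    (hζ : Measure.map ζ ℙ = gaussianReal 0 1)
    (hζU : IndepFun ζ U ℙ) (hζV : IndepFun ζ V ℙ)
    (σ : ℝ) (hσ : 0 < σ) :
    ⨆ z : ℝ, |(ℙ {ω | σ * Real.sqrt (U ω) * ζ ω ≤ z}).toReal -
        (ℙ {ω | σ * Real.sqrt (V ω) * ζ ω ≤ z}).toReal| ≤
      ⨆ t : ℝ, |(ℙ {ω | U ω ≤ t}).toReal - (ℙ {ω | V ω ≤ t}).toReal| :=
  stmt_9_general U V ζ hUmeas hVmeas hζmeas hζ hζU hζV σ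
end

section
/- Let N be a nonnegative integer-valued random variable with mean μ ∈ (0,∞), finite variance, and let ζ ~ N(0,1) be independent of N. Then for every σ > 0, the Wasserstein distance between the law of σ√(N/μ)·ζ and the normal distribution N(0,σ²) is at most σ·√(2/π)·√(Var(N))/μ. -/
/-!
Couple `X = σ √(N/μ) ζ` with `σ ζ ∼ N(0, σ²)` on the same probability space. For a 1-Lipschitz
`h`, `|E h(X) - E h(σζ)| ≤ E|X - σζ| = σ E|√(N/μ) - 1| E|ζ|` by independence, and `E|ζ| = √(2/π)`.
Finally `|√t - 1| ≤ |t - 1|` gives `E|√(N/μ) - 1| ≤ E|N - μ| / μ ≤ √(Var N) / μ`.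
-/

open MeasureTheory ProbabilityTheory Real Set
open scoped NNReal

lemma integral_Ioi_mul_exp_neg_mul_sq {b : ℝ} (hb : 0 < b) :
    ∫ r in Ioi (0 : ℝ), r * exp (-b * r ^ 2) = (2 * b)⁻¹ := by
  have h := integral_mul_cexp_neg_mul_sq (b := (b : ℂ)) (by simpa using hb)
  rw [← Complex.ofReal_ofNat, ← Complex.ofReal_mul, ← Complex.ofReal_inv] at h
  refine Complex.ofReal_injective (Eq.trans ?_ h)
  rw [← integral_complex_ofReal]
  push_cast
  rfl

lemma integral_abs_gaussianReal_zero_one : ∫ x, |x| ∂gaussianReal 0 1 = √(2 / π) := by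
  have hpdf (x : ℝ) : gaussianPDFReal 0 1 x • |x| =
      (√(2 * π))⁻¹ * (|x| * exp (-(1 / 2) * |x| ^ 2)) := by
    simp only [gaussianPDFReal, NNReal.coe_one, smul_eq_mul, sq_abs]
    ring_nf
  simp_rw [integral_gaussianReal_eq_integral_smul one_ne_zero, hpdf]
  rw [integral_const_mul, integral_comp_abs (f := fun t => t * exp (-(1 / 2) * t ^ 2)),
    integral_Ioi_mul_exp_neg_mul_sq (by norm_num),
    show (2 : ℝ) / π = 4 / (2 * π) by ring, sqrt_div' _ (by positivity),
    show (4 : ℝ) = 2 ^ 2 by norm_num, sqrt_sq zero_le_two]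
  ring

lemma abs_sqrt_sub_one_le (t : ℝ) : |√t - 1| ≤ |t - 1| := by
  rcases le_or_gt 0 t with ht | ht
  · calc |√t - 1| ≤ |√t - 1| * (√t + 1) := le_mul_of_one_le_right (abs_nonneg _) (by simp)
      _ = |(√t - 1) * (√t + 1)| := by rw [abs_mul, abs_of_nonneg (by positivity : 0 ≤ √t + 1)]
      _ = |t - 1| := by rw [show (√t - 1) * (√t + 1) = √t ^ 2 - 1 by ring, sq_sqrt ht]
  · rw [sqrt_eq_zero'.2 ht.le, abs_of_neg (by linarith : t - 1 < 0), zero_sub, abs_neg, abs_one]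
    linarith

section

variable {Ω : Type*} {mΩ : MeasurableSpace Ω} {P : Measure Ω}

lemma LipschitzWith.integrable_comp_s11 {E F : Type*} [NormedAddCommGroup E] [NormedAddCommGroup F]
    [IsFiniteMeasure P] {K : ℝ≥0} {h : E → F} (hh : LipschitzWith K h) {X : Ω → E}
    (hX : Integrable X P) : Integrable (fun ω => h (X ω)) P := by
  refine Integrable.mono' ((integrable_const ‖h 0‖).add (hX.norm.const_mul K))
    (hh.continuous.comp_aestronglyMeasurable hX.1) (ae_of_all _ fun ω => ?_)
  calc ‖h (X ω)‖ ≤ ‖h 0‖ + ‖h (X ω) - h 0‖ := norm_le_insert' _ _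
    _ ≤ ‖h 0‖ + K * ‖X ω‖ := by simpa using hh.norm_sub_le (X ω) 0

lemma LipschitzWith.abs_integral_comp_sub_le [IsFiniteMeasure P] {K : ℝ≥0} {h : ℝ → ℝ}
    (hh : LipschitzWith K h) {X Y : Ω → ℝ} (hX : Integrable X P) (hY : Integrable Y P) :
    |∫ ω, h (X ω) ∂P - ∫ ω, h (Y ω) ∂P| ≤ K * ∫ ω, |X ω - Y ω| ∂P := by
  rw [← integral_sub (hh.integrable_comp_s11 hX) (hh.integrable_comp_s11 hY), ← integral_const_mul]
  refine (abs_integral_le_integral_abs).trans <| integral_mono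
    ((hh.integrable_comp_s11 hX).sub (hh.integrable_comp_s11 hY)).abs ((hX.sub hY).abs.const_mul _)
    fun ω => ?_
  simpa only [Real.dist_eq] using hh.dist_le_mul (X ω) (Y ω)

lemma integral_abs_sub_integral_le_sqrt_variance [IsProbabilityMeasure P] {X : Ω → ℝ}
    (hX : MemLp X 2 P) : ∫ ω, |X ω - P[X]| ∂P ≤ √(Var[X; P]) := by
  set Y := fun ω => |X ω - P[X]|
  have hY : MemLp Y 2 P := (hX.sub (memLp_const _)).abs
  refine (le_abs_self _).trans (abs_le_sqrt ?_)
  calc P[Y] ^ 2 ≤ P[Y ^ 2] := by linarith [variance_eq_sub hY, variance_nonneg Y P]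
    _ = Var[X; P] := by
      simp only [variance_eq_integral hX.aemeasurable, Y, Pi.pow_apply, sq_abs]

lemma integrable_sqrt_div_sub_one [IsFiniteMeasure P] {W : Ω → ℝ} (hW : Integrable W P)
    (c : ℝ) : Integrable (fun ω => √(W ω / c) - 1) P :=
  Integrable.mono' ((hW.div_const c).sub (integrable_const 1)).abs
    ((continuous_sqrt.comp_aestronglyMeasurable (hW.div_const c).1).sub
      aestronglyMeasurable_const)
    (ae_of_all _ fun _ => abs_sqrt_sub_one_le _)

lemma integral_abs_sqrt_div_integral_sub_one_le [IsProbabilityMeasure P] {W : Ω → ℝ}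
    (hW : MemLp W 2 P) (hm : 0 < P[W]) :
    ∫ ω, |√(W ω / P[W]) - 1| ∂P ≤ √(Var[W; P]) / P[W] := by
  have hW1 : Integrable W P := hW.integrable one_le_two
  calc ∫ ω, |√(W ω / P[W]) - 1| ∂P ≤ ∫ ω, |W ω / P[W] - 1| ∂P :=
        integral_mono (integrable_sqrt_div_sub_one hW1 _).abs
          ((hW1.div_const _).sub (integrable_const 1)).abs fun ω => abs_sqrt_sub_one_le _
    _ = (∫ ω, |W ω - P[W]| ∂P) / P[W] := by
        rw [← integral_div]
        congr 1 with ω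
        rw [← abs_of_pos hm, ← abs_div, abs_of_pos hm, sub_div, div_self hm.ne']
    _ ≤ √(Var[W; P]) / P[W] := by
        gcongr
        exact integral_abs_sub_integral_le_sqrt_variance hW

end

theorem stmt_11_general {Ω : Type*} [MeasureSpace Ω] [IsProbabilityMeasure (ℙ : Measure Ω)]
    (N : Ω → ℕ) (ζ : Ω → ℝ)
    (hN2 : MemLp (fun ω => (N ω : ℝ)) 2 ℙ)
    (hζ : Measure.map ζ ℙ = gaussianReal 0 1)
    (hindep : IndepFun N ζ ℙ)
    (μ : ℝ) (hμ : μ = ∫ ω, (N ω : ℝ) ∂ℙ) (hμpos : 0 < μ)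
    (σ : ℝ) (hσ : 0 < σ) :
    ∀ h : ℝ → ℝ, LipschitzWith 1 h →
      |(∫ ω, h (σ * Real.sqrt ((N ω : ℝ) / μ) * ζ ω) ∂ℙ) -
          ∫ x, h x ∂(gaussianReal 0 ⟨σ ^ 2, sq_nonneg σ⟩)| ≤
        σ * Real.sqrt (2 / Real.pi) * Real.sqrt (Var[fun ω => (N ω : ℝ)]) / μ := by
  intro h hh
  have hζlaw : HasLaw ζ (gaussianReal 0 1) :=
    ⟨.of_map_ne_zero (by rw [hζ]; exact IsProbabilityMeasure.ne_zero _), hζ⟩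
  have hσζ : HasLaw (fun ω => σ * ζ ω) (gaussianReal 0 ⟨σ ^ 2, sq_nonneg σ⟩) := by
    have := gaussianReal_const_mul hζlaw σ
    rwa [mul_zero, mul_one] at this
  have hζint : Integrable ζ :=
    (integrable_map_measure aestronglyMeasurable_id hζlaw.aemeasurable).mp
      (hζ ▸ (memLp_id_gaussianReal 1).integrable le_rfl)
  set D := fun ω => √((N ω : ℝ) / μ) - 1
  have hD : Integrable D := integrable_sqrt_div_sub_one (hN2.integrable one_le_two) μ
  have hDζ : IndepFun D ζ :=
    hindep.comp (φ := fun n : ℕ => √((n : ℝ) / μ) - 1) measurable_from_nat measurable_id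
  have hsplit (ω : Ω) : σ * √((N ω : ℝ) / μ) * ζ ω = σ * ζ ω + σ * (D ω * ζ ω) := by
    simp only [D]; ring
  have hgauss : ∫ x, h x ∂(gaussianReal 0 ⟨σ ^ 2, sq_nonneg σ⟩) = ∫ ω, h (σ * ζ ω) :=
    (hσζ.integral_comp hh.continuous.aestronglyMeasurable).symm
  have hE : ∫ ω, |D ω| * |ζ ω| = (∫ ω, |D ω|) * √(2 / π) := by
    rw [hDζ.integral_fun_comp_mul_comp hD.1.aemeasurable hζlaw.aemeasurable
      continuous_abs.aestronglyMeasurable continuous_abs.aestronglyMeasurable,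
      ← integral_abs_gaussianReal_zero_one]
    congr 1
    exact hζlaw.integral_comp continuous_abs.aestronglyMeasurable
  calc _ = |(∫ ω, h (σ * ζ ω + σ * (D ω * ζ ω))) - ∫ ω, h (σ * ζ ω)| := by
        simp_rw [hgauss, hsplit]
    _ ≤ ((1 : ℝ≥0) : ℝ) * ∫ ω, |σ * ζ ω + σ * (D ω * ζ ω) - σ * ζ ω| :=
        hh.abs_integral_comp_sub_le (X := fun ω => σ * ζ ω + σ * (D ω * ζ ω))
          ((hζint.const_mul σ).add ((hDζ.integrable_mul hD hζint).const_mul σ))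
          (hζint.const_mul σ)
    _ = σ * ((∫ ω, |D ω|) * √(2 / π)) := by
        simp_rw [add_sub_cancel_left, abs_mul, abs_of_pos hσ, NNReal.coe_one, one_mul,
          integral_const_mul, hE]
    _ ≤ σ * ((√(Var[fun ω => (N ω : ℝ)]) / μ) * √(2 / π)) := by
        gcongr
        subst hμ
        exact integral_abs_sqrt_div_integral_sub_one_le hN2 hμpos
    _ = σ * √(2 / π) * √(Var[fun ω => (N ω : ℝ)]) / μ := by ring

/-- Let `N` be a nonnegative-integer-valued random variable with mean `μ ∈ (0,∞)` and
finite variance, and `ζ ~ N(0,1)` independent of `N`. For every `σ > 0`, the Wasserstein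
distance between the law of `σ√(N/μ) ζ` and `N(0,σ²)` is at most `σ √(2/π) √(Var N)/μ`. -/
theorem stmt_11 {Ω : Type*} [MeasureSpace Ω] [IsProbabilityMeasure (ℙ : Measure Ω)]
    (N : Ω → ℕ) (ζ : Ω → ℝ) (hNmeas : Measurable N) (hζmeas : Measurable ζ)
    (hN2 : MemLp (fun ω => (N ω : ℝ)) 2 ℙ)
    (hζ : Measure.map ζ ℙ = gaussianReal 0 1)
    (hindep : IndepFun N ζ ℙ)
    (μ : ℝ) (hμ : μ = ∫ ω, (N ω : ℝ) ∂ℙ) (hμpos : 0 < μ)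
    (σ : ℝ) (hσ : 0 < σ) :
    ∀ h : ℝ → ℝ, LipschitzWith 1 h →
      |(∫ ω, h (σ * Real.sqrt ((N ω : ℝ) / μ) * ζ ω) ∂ℙ) -
          ∫ x, h x ∂(gaussianReal 0 ⟨σ ^ 2, sq_nonneg σ⟩)| ≤
        σ * Real.sqrt (2 / Real.pi) * Real.sqrt (Var[fun ω => (N ω : ℝ)]) / μ :=
  stmt_11_general N ζ hN2 hζ hindep μ hμ hμpos σ hσ
end

section
/- For p ∈ (0,1], the function f(p) = ∑_{k=1}^∞ k^{-1/2}(1-p)^k satisfies f(p) ≤ 2(1/√p - 1). -/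
/-!
Let `c n` be the Taylor coefficients of `(1 - x)^(-1/2)`, so `c 0 = 1` and
`c (n + 1) = c n * (2n + 1) / (2n + 2)`. This recursion gives `4 n (c n)^2 ≥ 1` for `n ≥ 1`,
i.e. `1 / √n ≤ 2 c n`. Comparing termwise with `q = 1 - p`,
`f(p) ≤ 2 ∑_{n ≥ 1} c n q^n = 2 ((1 - q)^(-1/2) - 1) = 2 (1 / √p - 1)`.
-/

open Real

theorem Ring.succ_nsmul_choose_succ {R : Type*} [NonAssocRing R] [Pow R ℕ] [BinomialRing R]
    [NatPowAssoc R] (r : R) (n : ℕ) :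
    (n + 1) • Ring.choose r (n + 1) = r * Ring.choose (r - 1) n := by
  simpa [Ring.choose_one_right] using Ring.choose_smul_choose r (Nat.le_add_left 1 n)

theorem Real.hasSum_choose_mul_pow (a : ℝ) {x : ℝ} (hx : |x| < 1) :
    HasSum (fun n : ℕ ↦ Ring.choose (a + n - 1) n * x ^ n) (1 / (1 - x) ^ a) := by
  have hx' : x ∈ Metric.eball (0 : ℝ) 1 := by
    rwa [← ENNReal.ofReal_one, Metric.eball_ofReal, mem_ball_zero_iff, Real.norm_eq_abs]
  simpa [FormalMultilinearSeries.ofScalars_apply_eq, mul_comm] using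
    (one_div_one_sub_rpow_hasFPowerSeriesOnBall_zero a).hasSum hx'

/-- Equal to `Nat.centralBinom n / 4 ^ n`. -/
noncomputable def invSqrtCoeff (n : ℕ) : ℝ := Ring.choose ((1 / 2 : ℝ) + n - 1) n

theorem invSqrtCoeff_zero : invSqrtCoeff 0 = 1 := Ring.choose_zero_right _

theorem invSqrtCoeff_succ (n : ℕ) :
    invSqrtCoeff (n + 1) = (2 * n + 1) / (2 * n + 2) * invSqrtCoeff n := by
  have h := Ring.succ_nsmul_choose_succ ((1 / 2 : ℝ) + n) n
  rw [nsmul_eq_mul] at h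
  rw [invSqrtCoeff, invSqrtCoeff,
    show (1 / 2 : ℝ) + (n + 1 : ℕ) - 1 = 1 / 2 + n by push_cast; ring,
    div_mul_eq_mul_div, eq_div_iff (by positivity)]
  push_cast at h
  linear_combination 2 * h

theorem invSqrtCoeff_nonneg (n : ℕ) : 0 ≤ invSqrtCoeff n := by
  induction n with
  | zero => simp [invSqrtCoeff_zero]
  | succ n ih => rw [invSqrtCoeff_succ]; positivity

theorem one_le_four_mul_succ_mul_invSqrtCoeff_succ_sq (n : ℕ) :
    1 ≤ 4 * (n + 1) * invSqrtCoeff (n + 1) ^ 2 := by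
  induction n with
  | zero => norm_num [invSqrtCoeff_succ, invSqrtCoeff_zero]
  | succ n ih =>
    rw [invSqrtCoeff_succ (n + 1)]
    push_cast
    rw [div_mul_eq_mul_div, div_pow, mul_div_assoc', le_div_iff₀ (by positivity)]
    -- the step amounts to `(2n + 3)^2 ≥ 4 (n + 1) (n + 2)`
    nlinarith [sq_nonneg (invSqrtCoeff (n + 1))]

theorem one_div_sqrt_succ_le_two_mul_invSqrtCoeff_succ (n : ℕ) :
    1 / √(n + 1) ≤ 2 * invSqrtCoeff (n + 1) := by
  have hsq := one_le_four_mul_succ_mul_invSqrtCoeff_succ_sq n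
  have hc := invSqrtCoeff_nonneg (n + 1)
  rw [div_le_iff₀ (by positivity)]
  calc 1 ≤ √(4 * (n + 1) * invSqrtCoeff (n + 1) ^ 2) := by simpa using Real.sqrt_le_sqrt hsq
    _ = √((2 * invSqrtCoeff (n + 1)) ^ 2 * (n + 1)) := by ring_nf
    _ = 2 * invSqrtCoeff (n + 1) * √(n + 1) := by
      rw [Real.sqrt_mul (by positivity), Real.sqrt_sq (by positivity)]

theorem hasSum_invSqrtCoeff_mul_pow {x : ℝ} (hx : |x| < 1) :
    HasSum (fun n ↦ invSqrtCoeff n * x ^ n) (1 / √(1 - x)) := by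
  rw [Real.sqrt_eq_rpow]
  exact Real.hasSum_choose_mul_pow _ hx

/-- For `p ∈ (0,1]`, the series `f(p) = ∑_{k=1}^∞ (1-p)^k / √k` satisfies
`f(p) ≤ 2 (1/√p - 1)`. -/
theorem stmt_19 (p : ℝ) (hp : 0 < p) (hp1 : p ≤ 1) :
    ∑' k : ℕ, (1 - p) ^ (k + 1) / Real.sqrt (k + 1) ≤ 2 * (1 / Real.sqrt p - 1) := by
  have hq : |1 - p| < 1 := abs_lt.2 ⟨by linarith, by linarith⟩
  have hq0 : 0 ≤ 1 - p := by linarith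
  have hmajorant : HasSum (fun k : ℕ ↦ 2 * invSqrtCoeff (k + 1) * (1 - p) ^ (k + 1))
      (2 * (1 / √p - 1)) := by
    have h := (hasSum_nat_add_iff' 1).2 (hasSum_invSqrtCoeff_mul_pow hq)
    simpa [invSqrtCoeff_zero, mul_assoc] using h.mul_left 2
  have hterm (k : ℕ) :
      (1 - p) ^ (k + 1) / √(k + 1) ≤ 2 * invSqrtCoeff (k + 1) * (1 - p) ^ (k + 1) := by
    rw [div_eq_inv_mul, ← one_div]
    gcongr
    exact one_div_sqrt_succ_le_two_mul_invSqrtCoeff_succ k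
  have hnonneg (k : ℕ) : 0 ≤ (1 - p) ^ (k + 1) / √(k + 1) := by positivity
  exact hasSum_le hterm (hmajorant.summable.of_nonneg_of_le hnonneg hterm).hasSum hmajorant
end
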